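/- Under the construction hypotheses (a distributive lattice D, groups G_α, and transitive isomorphisms φ_{α,β} for β ≤ α with ψ = φ^{-1}), the additive semigroup (S, +) on S = Σ_{α∈D} G_α is a left normal band: x + x = x for all x ∈ S, and x + y + z = x + z + y for all x, y, z ∈ S. -/

import Mathlib

variable {D : Type*} [DistribLattice D] {G : D → Type*} [∀ α : D, Group (G α)]

/-- Multiplication on the disjoint union `S = Σ α, G α`:
`(α, x) · (β, y) = (αβ, φ_{α,αβ}(x) · φ_{β,αβ}(y))`. -/
def cMul (φ : ∀ α β : D, β ≤ α → (G α ≃* G β)) (s t : Σ α : D, G α) :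
    Σ α : D, G α :=
  ⟨s.1 ⊓ t.1,
    φ s.1 (s.1 ⊓ t.1) inf_le_left s.2 * φ t.1 (s.1 ⊓ t.1) inf_le_right t.2⟩

/-- Addition on the disjoint union `S = Σ α, G α`:
`(α, x) + (β, y) = (α + β, ψ_{α,α+β}(x))`, where `ψ_{β,α} = (φ_{α,β})⁻¹`
for `β ≤ α` (each `G α` carries the left-zero addition). -/
def cAdd (φ : ∀ α β : D, β ≤ α → (G α ≃* G β)) (s t : Σ α : D, G α) :
    Σ α : D, G α :=
  ⟨s.1 ⊔ t.1, (φ (s.1 ⊔ t.1) s.1 le_sup_left).symm s.2⟩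

/-! The sum `x + y` is `x` lifted along `ψ` to the level `x.1 ⊔ y.1`. Since the `ψ` compose
transitively, `x + y + z` is `x` lifted to `x.1 ⊔ y.1 ⊔ z.1`, a level symmetric in `y` and `z`;
and lifting to `x.1 ⊔ x.1 = x.1` is the identity. -/

section Lift

variable {P : Type*} [Preorder P] {M : P → Type*} [∀ α : P, Mul (M α)]
  (φ : ∀ α β : P, β ≤ α → (M α ≃* M β))

def liftTo (x : Σ α : P, M α) (s : P) (h : x.1 ≤ s) : Σ α : P, M α :=
  ⟨s, (φ s x.1 h).symm x.2⟩

theorem liftTo_congr (x : Σ α : P, M α) {s t : P} (hst : s = t) (hs : x.1 ≤ s) (ht : x.1 ≤ t) :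
    liftTo φ x s hs = liftTo φ x t ht := by
  subst hst
  rfl

theorem liftTo_self (hφ_id : ∀ (α : P) (x : M α), φ α α le_rfl x = x) (x : Σ α : P, M α) :
    liftTo φ x x.1 le_rfl = x := by
  obtain ⟨α, a⟩ := x
  simp only [liftTo, Sigma.mk.injEq, heq_eq_eq, true_and]
  rw [MulEquiv.symm_apply_eq, hφ_id]

theorem symm_phi_symm_phi
    (hφ_trans : ∀ {α β γ : P} (h1 : γ ≤ β) (h2 : β ≤ α) (x : M α),
      φ β γ h1 (φ α β h2 x) = φ α γ (h1.trans h2) x)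
    {α β γ : P} (h1 : α ≤ β) (h2 : β ≤ γ) (x : M α) :
    (φ γ β h2).symm ((φ β α h1).symm x) = (φ γ α (h1.trans h2)).symm x := by
  rw [MulEquiv.eq_symm_apply, ← hφ_trans h1 h2, MulEquiv.apply_symm_apply,
    MulEquiv.apply_symm_apply]

theorem liftTo_liftTo
    (hφ_trans : ∀ {α β γ : P} (h1 : γ ≤ β) (h2 : β ≤ α) (x : M α),
      φ β γ h1 (φ α β h2 x) = φ α γ (h1.trans h2) x)
    (x : Σ α : P, M α) {s t : P} (hs : x.1 ≤ s) (hst : s ≤ t) :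
    liftTo φ (liftTo φ x s hs) t hst = liftTo φ x t (hs.trans hst) :=
  congrArg (Sigma.mk t) (symm_phi_symm_phi φ hφ_trans hs hst x.2)

end Lift

section Add

variable (φ : ∀ α β : D, β ≤ α → (G α ≃* G β))

theorem cAdd_eq_liftTo (x y : Σ α : D, G α) : cAdd φ x y = liftTo φ x (x.1 ⊔ y.1) le_sup_left :=
  rfl

theorem cAdd_cAdd
    (hφ_trans : ∀ {α β γ : D} (h1 : γ ≤ β) (h2 : β ≤ α) (x : G α),
      φ β γ h1 (φ α β h2 x) = φ α γ (h1.trans h2) x)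
    (x y z : Σ α : D, G α) :
    cAdd φ (cAdd φ x y) z = liftTo φ x (x.1 ⊔ y.1 ⊔ z.1) (le_sup_left.trans le_sup_left) :=
  liftTo_liftTo φ hφ_trans x le_sup_left le_sup_left

end Add

/-- Under the construction hypotheses, the additive
semigroup `(S, +)` on `S = Σ α, G α` is a left normal band:
`x + x = x` for all `x ∈ S` and `x + y + z = x + z + y` for all
`x, y, z ∈ S`. -/
theorem construction_add_left_normal_band
    (φ : ∀ α β : D, β ≤ α → (G α ≃* G β))
    (hφ_id : ∀ (α : D) (x : G α), φ α α le_rfl x = x)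
    (hφ_trans : ∀ {α β γ : D} (h1 : γ ≤ β) (h2 : β ≤ α) (x : G α),
      φ β γ h1 (φ α β h2 x) = φ α γ (h1.trans h2) x)
    :
    (∀ x : Σ α : D, G α, cAdd φ x x = x) ∧
    (∀ x y z : Σ α : D, G α,
      cAdd φ (cAdd φ x y) z = cAdd φ (cAdd φ x z) y) := by
  constructor
  · intro x
    rw [cAdd_eq_liftTo, liftTo_congr φ x (sup_idem x.1) _ le_rfl, liftTo_self φ hφ_id]
  · intro x y z
    rw [cAdd_cAdd φ hφ_trans, cAdd_cAdd φ hφ_trans]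
    exact liftTo_congr φ x (sup_right_comm x.1 y.1 z.1) _ _
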